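/- arXiv:math-ph/0602008 — 2 statements merged into one kernel-verified Lean document; each statement's English description precedes it below -/
import Mathlib

section
/- Let U : ℝ → ℝ be an arbitrary smooth function. Then the pair u(x,y,t) = U(y - t), v(x,y,t) = x solves the plasma system ∂_t(u - ∇²u ± ∇²v) + {v ± u, u - ∇²u ± ∇²v} = 0 (both sign choices). Likewise, for arbitrary constants c₁, c₂, c₃, k ∈ ℝ, the pair u(x,y,t) = c₁ sin(k(x - t)) + c₂ sin(k(y - t)) + c₃, v(x,y,t) = x - y solves the same system. -/
/-- Partial derivative in `x` of a function of `(x, y, t)`. -/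
noncomputable def pdx (f : ℝ → ℝ → ℝ → ℝ) (x y t : ℝ) : ℝ :=
  deriv (fun x' => f x' y t) x

/-- Partial derivative in `y` of a function of `(x, y, t)`. -/
noncomputable def pdy (f : ℝ → ℝ → ℝ → ℝ) (x y t : ℝ) : ℝ :=
  deriv (fun y' => f x y' t) y

/-- Partial derivative in `t` of a function of `(x, y, t)`. -/
noncomputable def pdt (f : ℝ → ℝ → ℝ → ℝ) (x y t : ℝ) : ℝ :=
  deriv (fun t' => f x y t') t

/-- Two-dimensional Laplacian `∇²f = f_xx + f_yy` (derivatives in `x`, `y` only). -/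
noncomputable def lap (f : ℝ → ℝ → ℝ → ℝ) (x y t : ℝ) : ℝ :=
  deriv (deriv (fun x' => f x' y t)) x + deriv (deriv (fun y' => f x y' t)) y

/-- Poisson bracket `{f, g} = f_x g_y - g_x f_y`. -/
noncomputable def pb (f g : ℝ → ℝ → ℝ → ℝ) (x y t : ℝ) : ℝ :=
  pdx f x y t * pdy g x y t - pdx g x y t * pdy f x y t

/-- The quantity `u - ∇²u + ε ∇²v` (with sign `ε = ±1`). -/
noncomputable def plasmaW (ε : ℝ) (u v : ℝ → ℝ → ℝ → ℝ) : ℝ → ℝ → ℝ → ℝ :=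
  fun x y t => u x y t - lap u x y t + ε * lap v x y t

/-- The plasma system `∂_t(u - ∇²u ± ∇²v) + {v ± u, u - ∇²u ± ∇²v} = 0`
(both sign choices `ε = 1` and `ε = -1`). -/
def IsPlasmaSol (u v : ℝ → ℝ → ℝ → ℝ) : Prop :=
  ∀ ε ∈ ({1, -1} : Set ℝ), ∀ x y t : ℝ,
    pdt (plasmaW ε u v) x y t
      + pb (fun x' y' t' => v x' y' t' + ε * u x' y' t') (plasmaW ε u v) x y t = 0

/-- Smoothness of a function of `(x, y, t)`. -/
def Smooth3 (f : ℝ → ℝ → ℝ → ℝ) : Prop :=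
  ContDiff ℝ (⊤ : ℕ∞) (fun p : ℝ × ℝ × ℝ => f p.1 p.2.1 p.2.2)

lemma hasDerivAt_sinA (k c a : ℝ) :
    HasDerivAt (fun a' => Real.sin (k * (a' - c))) (k * Real.cos (k * (a - c))) a := by
  have h := (Real.hasDerivAt_sin (k * (a - c))).comp a
    (((hasDerivAt_id a).sub_const c).const_mul k)
  exact h.congr_deriv (by ring)

lemma hasDerivAt_sinB (k c a : ℝ) :
    HasDerivAt (fun c' => Real.sin (k * (a - c'))) (-(k * Real.cos (k * (a - c)))) c := by
  have h := (Real.hasDerivAt_sin (k * (a - c))).comp c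
    (((hasDerivAt_id c).const_sub a).const_mul k)
  exact h.congr_deriv (by ring)

lemma hasDerivAt_cosA (k c a : ℝ) :
    HasDerivAt (fun a' => Real.cos (k * (a' - c))) (-(k * Real.sin (k * (a - c)))) a := by
  have h := (Real.hasDerivAt_cos (k * (a - c))).comp a
    (((hasDerivAt_id a).sub_const c).const_mul k)
  exact h.congr_deriv (by ring)


-- generic derivative lemmas for a*sin(k(x-t)) + b*sin(k(y-t)) + c
lemma lap_gen (k a b c x y t : ℝ) :
    lap (fun x y t => a * Real.sin (k * (x - t)) + b * Real.sin (k * (y - t)) + c) x y t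
      = a * (k * (-(k * Real.sin (k * (x - t))))) + b * (k * (-(k * Real.sin (k * (y - t))))) := by
  unfold lap
  have hx : deriv (fun x' => a * Real.sin (k * (x' - t)) + b * Real.sin (k * (y - t)) + c)
      = fun x => a * (k * Real.cos (k * (x - t))) := by
    funext x
    exact ((((hasDerivAt_sinA k t x).const_mul a).add_const
      (b * Real.sin (k * (y - t)))).add_const c).deriv
  have hy : deriv (fun y' => a * Real.sin (k * (x - t)) + b * Real.sin (k * (y' - t)) + c)
      = fun y => b * (k * Real.cos (k * (y - t))) := by
    funext y
    exact ((((hasDerivAt_sinA k t y).const_mul b).const_add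
      (a * Real.sin (k * (x - t)))).add_const c).deriv
  rw [hx, hy,
    (((hasDerivAt_cosA k t x).const_mul k).const_mul a).deriv,
    (((hasDerivAt_cosA k t y).const_mul k).const_mul b).deriv]

lemma lap_xy (x y t : ℝ) : lap (fun x _y _t => x) x y t = 0 := by
  unfold lap
  have h1 : deriv (fun x' : ℝ => x') = fun _ : ℝ => (1:ℝ) := funext fun x => deriv_id x
  have h2 : deriv (fun _ : ℝ => x) = fun _ : ℝ => (0:ℝ) := funext fun z => deriv_const z x
  rw [h1, h2, deriv_const, deriv_const, add_zero]

lemma lap_xmy (x y t : ℝ) : lap (fun x y _t => x - y) x y t = 0 := by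
  unfold lap
  have h1 : deriv (fun x' : ℝ => x' - y) = fun _ : ℝ => (1:ℝ) :=
    funext fun x => ((hasDerivAt_id x).sub_const y).deriv
  have h2 : deriv (fun y' : ℝ => x - y') = fun _ : ℝ => (-1:ℝ) :=
    funext fun y => ((hasDerivAt_id y).const_sub x).deriv
  rw [h1, h2, deriv_const, deriv_const, add_zero]

/-- For any smooth `U : ℝ → ℝ`, the pair `u = U(y - t)`, `v = x` solves
the plasma system; likewise, for arbitrary constants `c₁, c₂, c₃, k ∈ ℝ`, the pair
`u = c₁ sin(k(x - t)) + c₂ sin(k(y - t)) + c₃`, `v = x - y` solves the same system. -/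
theorem plasma_elementary_solutions (U : ℝ → ℝ) (hU : ContDiff ℝ (⊤ : ℕ∞) U)
    (c₁ c₂ c₃ k : ℝ) :
    IsPlasmaSol (fun _x y t => U (y - t)) (fun x _y _t => x) ∧
    IsPlasmaSol
      (fun x y t => c₁ * Real.sin (k * (x - t)) + c₂ * Real.sin (k * (y - t)) + c₃)
      (fun x y _t => x - y) := by
  have hU0 : ContDiff ℝ (↑(⊤ : ℕ∞)) U := hU.of_le (by simp)
  have hU' : ContDiff ℝ (↑(⊤ : ℕ∞)) (deriv U) := (contDiff_infty_iff_deriv.mp hU0).2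
  have hU'' : ContDiff ℝ (↑(⊤ : ℕ∞)) (deriv (deriv U)) := (contDiff_infty_iff_deriv.mp hU').2
  have hdU : Differentiable ℝ U := hU.differentiable (by simp)
  have hdU'' : Differentiable ℝ (deriv (deriv U)) := hU''.differentiable (by simp)
  constructor
  · -- first solution
    intro ε _ x y t
    have hlapu : ∀ x y t : ℝ, lap (fun _x y t => U (y - t)) x y t
        = deriv (deriv U) (y - t) := by
      intro x y t
      unfold lap
      have h1 : deriv (fun _ : ℝ => U (y - t)) = fun _ : ℝ => (0:ℝ) :=
        funext fun z => deriv_const z _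
      have h2 : deriv (fun y' : ℝ => U (y' - t)) = fun y => deriv U (y - t) :=
        funext fun y => deriv_comp_sub_const ..
      rw [h1, h2, deriv_const, zero_add, deriv_comp_sub_const]
    have hW : plasmaW ε (fun _x y t => U (y - t)) (fun x _y _t => x)
        = fun _x y t => U (y - t) - deriv (deriv U) (y - t) := by
      funext x y t
      simp only [plasmaW, hlapu, lap_xy, mul_zero, add_zero]
    rw [hW]
    simp only [pdt, pb, pdx, pdy]
    have hUy : HasDerivAt (fun y' => U (y' - t)) (deriv U (y - t) * 1) y :=
      (hdU (y - t)).hasDerivAt.comp y ((hasDerivAt_id y).sub_const t)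
    have hU''y : HasDerivAt (fun y' => deriv (deriv U) (y' - t))
        (deriv (deriv (deriv U)) (y - t) * 1) y := by
      have h := (hdU'' (y - t)).hasDerivAt.comp y ((hasDerivAt_id y).sub_const t); exact h
    have hUt : HasDerivAt (fun t' => U (y - t')) (deriv U (y - t) * (-1)) t :=
      (hdU (y - t)).hasDerivAt.comp t ((hasDerivAt_id t).const_sub y)
    have hU''t : HasDerivAt (fun t' => deriv (deriv U) (y - t'))
        (deriv (deriv (deriv U)) (y - t) * (-1)) t :=
      (hdU'' (y - t)).hasDerivAt.comp t ((hasDerivAt_id t).const_sub y)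
    have hfx1 : HasDerivAt (fun x' => x' + ε * U (y - t)) (1 : ℝ) x :=
      (hasDerivAt_id x).add_const (ε * U (y - t))
    have hfy1 : HasDerivAt (fun y' => x + ε * U (y' - t)) (ε * (deriv U (y - t) * 1)) y :=
      (hUy.const_mul ε).const_add x
    rw [show deriv (fun t' => U (y - t') - deriv (deriv U) (y - t')) t = _ from (hUt.sub hU''t).deriv,
      show deriv (fun y' => U (y' - t) - deriv (deriv U) (y' - t)) y = _ from (hUy.sub hU''y).deriv,
      deriv_const, hfx1.deriv, hfy1.deriv]
    ring
  · -- second solution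
    intro ε _ x y t
    have hlapu := lap_gen k c₁ c₂ c₃
    have hW : plasmaW ε
        (fun x y t => c₁ * Real.sin (k * (x - t)) + c₂ * Real.sin (k * (y - t)) + c₃)
        (fun x y _t => x - y)
        = fun x y t => (c₁ * (1 + k ^ 2)) * Real.sin (k * (x - t))
            + (c₂ * (1 + k ^ 2)) * Real.sin (k * (y - t)) + c₃ := by
      funext x y t
      simp only [plasmaW, hlapu, lap_xmy, mul_zero, add_zero]
      ring
    rw [hW]
    simp only [pdt, pb, pdx, pdy]
    set d₁ := c₁ * (1 + k ^ 2)
    set d₂ := c₂ * (1 + k ^ 2)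
    have hWt : HasDerivAt (fun t' => d₁ * Real.sin (k * (x - t'))
        + d₂ * Real.sin (k * (y - t')) + c₃)
        (d₁ * (-(k * Real.cos (k * (x - t)))) + d₂ * (-(k * Real.cos (k * (y - t))))) t :=
      (((hasDerivAt_sinB k t x).const_mul d₁).add
        ((hasDerivAt_sinB k t y).const_mul d₂)).add_const c₃
    have hWx : HasDerivAt (fun x' => d₁ * Real.sin (k * (x' - t))
        + d₂ * Real.sin (k * (y - t)) + c₃) (d₁ * (k * Real.cos (k * (x - t)))) x :=
      (((hasDerivAt_sinA k t x).const_mul d₁).add_const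
        (d₂ * Real.sin (k * (y - t)))).add_const c₃
    have hWy : HasDerivAt (fun y' => d₁ * Real.sin (k * (x - t))
        + d₂ * Real.sin (k * (y' - t)) + c₃) (d₂ * (k * Real.cos (k * (y - t)))) y :=
      (((hasDerivAt_sinA k t y).const_mul d₂).const_add
        (d₁ * Real.sin (k * (x - t)))).add_const c₃
    have hfx : HasDerivAt (fun x' => (x' - y)
        + ε * (c₁ * Real.sin (k * (x' - t)) + c₂ * Real.sin (k * (y - t)) + c₃))
        (1 + ε * (c₁ * (k * Real.cos (k * (x - t))))) x :=
      ((hasDerivAt_id x).sub_const y).add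
        (((((hasDerivAt_sinA k t x).const_mul c₁).add_const
          (c₂ * Real.sin (k * (y - t)))).add_const c₃).const_mul ε)
    have hfy : HasDerivAt (fun y' => (x - y')
        + ε * (c₁ * Real.sin (k * (x - t)) + c₂ * Real.sin (k * (y' - t)) + c₃))
        (-1 + ε * (c₂ * (k * Real.cos (k * (y - t))))) y :=
      ((hasDerivAt_id y).const_sub x).add
        (((((hasDerivAt_sinA k t y).const_mul c₂).const_add
          (c₁ * Real.sin (k * (x - t)))).add_const c₃).const_mul ε)
    rw [hWt.deriv, hWx.deriv, hWy.deriv, hfx.deriv, hfy.deriv]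
    simp only [d₁, d₂]
    ring
end

section
/- Let p ≠ -1 and k ≠ 0 be real constants, let F : ℝ → ℝ be smooth, and let w : ℝ → ℝ be a C² solution of the ODE w''(s) = F(w(s)). Then u(x,y) = w( x^{p+1}/(p+1) - k·y ) solves the equation u_xx + (a/x)·u_x + u_yy = x^{2p} F(u) + G(u) with a = -p and G = k²·F, on the open half-plane x > 0. (For p = -1 the same conclusion holds with the invariant variable s = ln x - k·y.) -/
open Real Filter

/-- Second `y`-derivative of `y ↦ w (c - k y)`. -/
lemma gss_aux_ypart (k c y : ℝ) (w : ℝ → ℝ)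
    (hw1 : Differentiable ℝ w) (hw2 : Differentiable ℝ (deriv w)) :
    deriv (deriv (fun y' : ℝ => w (c - k * y'))) y
      = deriv (deriv w) (c - k * y) * (k ^ 2) := by
  have hin : ∀ y' : ℝ, HasDerivAt (fun t : ℝ => c - k * t) (-k) y' := by
    intro y'
    simpa using ((hasDerivAt_id y').const_mul k).const_sub c
  have h1 : deriv (fun y' : ℝ => w (c - k * y'))
      = fun y' : ℝ => deriv w (c - k * y') * (-k) := by
    funext y'
    exact (((hw1 _).hasDerivAt).comp y' (hin y')).deriv
  rw [h1]
  have h2 : HasDerivAt (fun y' : ℝ => deriv w (c - k * y') * (-k))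
      ((deriv (deriv w) (c - k * y) * (-k)) * (-k)) y := by
    exact ((((hw2 _).hasDerivAt).comp y (hin y)).mul_const (-k))
  rw [h2.deriv]; ring

lemma gss_aux_deriv_w (w : ℝ → ℝ) (hw : ContDiff ℝ 2 w) :
    Differentiable ℝ (deriv w) := by
  have h2 : ContDiff ℝ ((1:ℕ∞)+1) w := by norm_num at hw ⊢; exact_mod_cast hw
  exact (contDiff_succ_iff_deriv.mp h2).2.2.differentiable (by simp)

/-- Let `p ≠ -1`, `k ≠ 0`, `F` smooth, and `w : ℝ → ℝ` a C² solution of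
`w'' = F ∘ w`. Then `u(x,y) = w( x^{p+1}/(p+1) - k·y )` solves
`u_xx + (a/x)·u_x + u_yy = x^{2p} F(u) + G(u)` with `a = -p` and `G = k²·F` on the
half-plane `x > 0`; for `p = -1` the same holds with the invariant variable
`s = ln x - k·y` (where `a = -p = 1` and `x^{2p} = x^{-2}`). -/
theorem gss_conditional_symmetry_reduction (p k : ℝ) (hp : p ≠ -1) (hk : k ≠ 0)
    (F : ℝ → ℝ) (hF : ContDiff ℝ (⊤ : ℕ∞) F)
    (w : ℝ → ℝ) (hw : ContDiff ℝ 2 w)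
    (hweq : ∀ s : ℝ, deriv (deriv w) s = F (w s)) :
    (∀ x y : ℝ, 0 < x →
      deriv (deriv (fun x' : ℝ => w (x' ^ (p + 1) / (p + 1) - k * y))) x
        + (-p / x) * deriv (fun x' : ℝ => w (x' ^ (p + 1) / (p + 1) - k * y)) x
        + deriv (deriv (fun y' : ℝ => w (x ^ (p + 1) / (p + 1) - k * y'))) y
      = x ^ (2 * p) * F (w (x ^ (p + 1) / (p + 1) - k * y))
        + k ^ 2 * F (w (x ^ (p + 1) / (p + 1) - k * y))) ∧
    (∀ x y : ℝ, 0 < x →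
      deriv (deriv (fun x' : ℝ => w (Real.log x' - k * y))) x
        + (1 / x) * deriv (fun x' : ℝ => w (Real.log x' - k * y)) x
        + deriv (deriv (fun y' : ℝ => w (Real.log x - k * y'))) y
      = x ^ (-2 : ℝ) * F (w (Real.log x - k * y))
        + k ^ 2 * F (w (Real.log x - k * y))) := by
  have hw1 : Differentiable ℝ w := hw.differentiable (by norm_num)
  have hw2 : Differentiable ℝ (deriv w) := gss_aux_deriv_w w hw
  constructor
  · -- general p case
    intro x y hx
    set s : ℝ → ℝ := fun x' => x' ^ (p + 1) / (p + 1) - k * y with hs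
    -- derivative of s on positive reals
    have hsd : ∀ x' : ℝ, x' ≠ 0 → HasDerivAt s (x' ^ p) x' := by
      intro x' hx'
      have h := (Real.hasDerivAt_rpow_const (p := p + 1) (Or.inl hx')).div_const (p + 1)
      have hp1 : p + 1 ≠ 0 := by intro h0; exact hp (by linarith)
      rw [show p + 1 - 1 = p by ring] at h
      have heq : ((p + 1) * x' ^ p) / (p + 1) = x' ^ p := by field_simp
      rw [heq] at h
      exact h.sub_const (k * y)
    -- first derivative eventually
    have hev : deriv (fun x' : ℝ => w (s x')) =ᶠ[nhds x]
        fun x' : ℝ => deriv w (s x') * x' ^ p := by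
      filter_upwards [eventually_gt_nhds hx] with x' hx'
      exact (((hw1 _).hasDerivAt).comp x' (hsd x' (ne_of_gt hx'))).deriv
    have hxne : x ≠ 0 := ne_of_gt hx
    have h2 : HasDerivAt (fun x' : ℝ => deriv w (s x') * x' ^ p)
        ((deriv (deriv w) (s x) * x ^ p) * x ^ p
          + deriv w (s x) * (p * x ^ (p - 1))) x := by
      exact (((hw2 _).hasDerivAt).comp x (hsd x hxne)).mul
        (Real.hasDerivAt_rpow_const (Or.inl hxne))
    have hdd : deriv (deriv (fun x' : ℝ => w (s x'))) x
        = (deriv (deriv w) (s x) * x ^ p) * x ^ p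
          + deriv w (s x) * (p * x ^ (p - 1)) := by
      rw [hev.deriv_eq]; exact h2.deriv
    have hd1 : deriv (fun x' : ℝ => w (s x')) x = deriv w (s x) * x ^ p :=
      (((hw1 _).hasDerivAt).comp x (hsd x hxne)).deriv
    have hy := gss_aux_ypart k (x ^ (p + 1) / (p + 1)) y w hw1 hw2
    have hsx : s x = x ^ (p + 1) / (p + 1) - k * y := rfl
    rw [hdd, hd1, hy, hweq, hsx]
    have hpp : x ^ p * x ^ p = x ^ (2 * p) := by
      rw [← Real.rpow_add hx]; ring_nf
    have hpm : x ^ (p - 1) = x ^ p / x := by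
      rw [Real.rpow_sub hx, Real.rpow_one]
    rw [hpm, ← hpp]
    field_simp
    ring
  · -- log case
    intro x y hx
    set s : ℝ → ℝ := fun x' => Real.log x' - k * y with hs
    have hsd : ∀ x' : ℝ, x' ≠ 0 → HasDerivAt s x'⁻¹ x' := by
      intro x' hx'
      simpa [hs] using (Real.hasDerivAt_log hx').sub_const (k * y)
    have hxne : x ≠ 0 := ne_of_gt hx
    have hev : deriv (fun x' : ℝ => w (s x')) =ᶠ[nhds x]
        fun x' : ℝ => deriv w (s x') * x'⁻¹ := by
      filter_upwards [eventually_gt_nhds hx] with x' hx'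
      exact (((hw1 _).hasDerivAt).comp x' (hsd x' (ne_of_gt hx'))).deriv
    have h2 : HasDerivAt (fun x' : ℝ => deriv w (s x') * x'⁻¹)
        ((deriv (deriv w) (s x) * x⁻¹) * x⁻¹
          + deriv w (s x) * (-(x ^ 2)⁻¹)) x := by
      exact (((hw2 _).hasDerivAt).comp x (hsd x hxne)).mul (hasDerivAt_inv hxne)
    have hdd : deriv (deriv (fun x' : ℝ => w (s x'))) x
        = (deriv (deriv w) (s x) * x⁻¹) * x⁻¹ + deriv w (s x) * (-(x ^ 2)⁻¹) := by
      rw [hev.deriv_eq]; exact h2.deriv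
    have hd1 : deriv (fun x' : ℝ => w (s x')) x = deriv w (s x) * x⁻¹ :=
      (((hw1 _).hasDerivAt).comp x (hsd x hxne)).deriv
    have hy := gss_aux_ypart k (Real.log x) y w hw1 hw2
    have hsx : s x = Real.log x - k * y := rfl
    rw [hdd, hd1, hy, hweq, hsx]
    have hx2 : x ^ (-2 : ℝ) = (x ^ 2)⁻¹ := by
      rw [show (-2 : ℝ) = ((-2 : ℤ) : ℝ) by norm_num, Real.rpow_intCast]
      rw [zpow_neg]; norm_cast
    rw [hx2]
    field_simp
    ring
end
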